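/- On the Kenmotsu 3-manifold M = ℝ² × ℝ with metric g = e^{2z}(dx² + dy²) + dz², the function f(x,y,z) = -x e^z + z has gradient Df = -e^{-z}∂_x + (1 - x e^z)∂_z, and g is a gradient almost *-Ricci soliton with potential function f and soliton function λ = x e^z, i.e., Hess f + S* + λ g = 0. -/

import Mathlib

noncomputable section

open Real

/-- Points of `M = ℝ² × ℝ`, with coordinates `(x,y,z) = (p 0, p 1, p 2)`. -/
abbrev Pt : Type := Fin 3 → ℝ

/-- Vector fields on `M`, given by their components in the coordinate frame
`∂x, ∂y, ∂z`. -/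
abbrev VF : Type := Pt → Pt

/-- smooth vector fields -/
def SmoothVF (X : VF) : Prop := ContDiff ℝ (⊤ : ℕ∞) X

/-- the Kenmotsu metric `g = e^{2z}(dx² + dy²) + dz²` -/
def gmet (X Y : VF) (p : Pt) : ℝ :=
  exp (2 * p 2) * (X p 0 * Y p 0 + X p 1 * Y p 1) + X p 2 * Y p 2

/-- the Reeb vector field `ξ = ∂z` -/
def xi : VF := fun _ i => if i = 2 then 1 else 0

/-- the contact form `η = dz` -/
def eta (X : VF) (p : Pt) : ℝ := X p 2

/-- the structure tensor: `φ(∂x) = ∂y`, `φ(∂y) = -∂x`, `φ(∂z) = 0` -/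
def phi (X : VF) : VF := fun p i =>
  if i = 0 then -(X p 1) else if i = 1 then X p 0 else 0

/-- the Levi-Civita connection of `g`, written out via its Christoffel
symbols: `∇_{∂x}∂x = -e^{2z}∂z`, `∇_{∂x}∂z = ∂x`, `∇_{∂y}∂y = -e^{2z}∂z`,
`∇_{∂y}∂z = ∂y`, `∇_{∂z}∂z = 0`, mixed ones vanishing. -/
def nabla (X Y : VF) : VF := fun p i =>
  fderiv ℝ (fun q => Y q i) p (X p) +
    (if i = 0 then X p 0 * Y p 2 + X p 2 * Y p 0
     else if i = 1 then X p 1 * Y p 2 + X p 2 * Y p 1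
     else -exp (2 * p 2) * (X p 0 * Y p 0 + X p 1 * Y p 1))

/-- the Lie bracket of vector fields -/
def bracket (X Y : VF) : VF := fun p =>
  fderiv ℝ Y p (X p) - fderiv ℝ X p (Y p)

/-- the Riemann curvature tensor `R(X,Y)Z` -/
def Rm (X Y Z : VF) : VF := fun p =>
  nabla X (nabla Y Z) p - nabla Y (nabla X Z) p - nabla (bracket X Y) Z p

/-- the potential function `f(x,y,z) = -x e^z + z` -/
def f (p : Pt) : ℝ := -(p 0) * exp (p 2) + p 2

/-- its claimed gradient `Df = -e^{-z} ∂x + (1 - x e^z) ∂z` -/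
def gradF : VF := fun p i =>
  if i = 0 then -exp (-(p 2)) else if i = 2 then 1 - p 0 * exp (p 2) else 0

/-- the `*`-Ricci tensor of this Kenmotsu `3`-manifold:
`S*(X,Y) = -g(X,Y) + η(X)η(Y)` -/
def Sstar (X Y : VF) (p : Pt) : ℝ := -(gmet X Y p) + eta X p * eta Y p

/-- the soliton function `λ = x e^z` -/
def lam (p : Pt) : ℝ := p 0 * exp (p 2)

notation "P" i => (ContinuousLinearMap.proj i : Pt →L[ℝ] ℝ)

lemma hasF_coord (i : Fin 3) (p : Pt) :
    HasFDerivAt (fun q : Pt => q i) (P i) p :=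
  (ContinuousLinearMap.proj i : Pt →L[ℝ] ℝ).hasFDerivAt

lemma exp_two (t : ℝ) : exp (2 * t) = exp t * exp t := by
  rw [two_mul, exp_add]

lemma fderiv_f (p v : Pt) :
    fderiv ℝ f p v = -(v 0) * exp (p 2) + -(p 0) * (exp (p 2) * v 2) + v 2 := by
  have h : HasFDerivAt f
      ((-(p 0)) • (exp (p 2) • (P (2 : Fin 3))) + exp (p 2) • (-(P (0 : Fin 3)))
        + (P (2 : Fin 3))) p :=
    (((hasF_coord 0 p).neg.mul ((hasF_coord 2 p).exp)).add (hasF_coord 2 p))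
  rw [h.fderiv]
  simp [ContinuousLinearMap.proj]
  ring

lemma fderiv_G0 (p v : Pt) :
    fderiv ℝ (fun q : Pt => gradF q 0) p v = exp (-(p 2)) * v 2 := by
  have h : HasFDerivAt (fun q : Pt => gradF q 0)
      (-(exp (-(p 2)) • (-(P (2 : Fin 3))))) p := by
    have h2 := ((hasF_coord 2 p).neg.exp).neg
    have he : (fun q : Pt => gradF q 0) = fun q : Pt => -exp (-(q 2)) := by
      funext q; simp [gradF]
    rw [he]; exact h2
  rw [h.fderiv]
  simp [ContinuousLinearMap.proj]

lemma fderiv_G1 (p v : Pt) :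
    fderiv ℝ (fun q : Pt => gradF q 1) p v = 0 := by
  have he : (fun q : Pt => gradF q 1) = fun _ => (0 : ℝ) := by
    funext q; simp [gradF]
  rw [he, fderiv_fun_const]
  simp

lemma fderiv_G2 (p v : Pt) :
    fderiv ℝ (fun q : Pt => gradF q 2) p v
      = -(v 0) * exp (p 2) + -(p 0) * (exp (p 2) * v 2) := by
  have h : HasFDerivAt (fun q : Pt => gradF q 2)
      ((0 : Pt →L[ℝ] ℝ) -
        ((p 0) • (exp (p 2) • (P (2 : Fin 3))) + exp (p 2) • (P (0 : Fin 3)))) p := by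
    have hc : HasFDerivAt (fun _ : Pt => (1 : ℝ)) (0 : Pt →L[ℝ] ℝ) p :=
      hasFDerivAt_const 1 p
    have hm := hc.sub ((hasF_coord 0 p).mul ((hasF_coord 2 p).exp))
    have he : (fun q : Pt => gradF q 2) = fun q : Pt => 1 - q 0 * exp (q 2) := by
      funext q; simp [gradF]
    rw [he]; exact hm
  rw [h.fderiv]
  simp [ContinuousLinearMap.proj]
  ring

/-- On the Kenmotsu `3`-manifold `M = ℝ² × ℝ` with metric
`g = e^{2z}(dx² + dy²) + dz²`, the function `f(x,y,z) = -x e^z + z` has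
gradient `Df = -e^{-z}∂x + (1 - x e^z)∂z`, and `g` is a gradient almost
`*`-Ricci soliton with potential function `f` and soliton function
`λ = x e^z`, i.e. `Hess f + S* + λ g = 0`, where
`(Hess f)(X,Y) = g(∇_X Df, Y)`. -/
theorem stmt19 :
    (∀ X : VF, SmoothVF X →
      ∀ p : Pt, gmet gradF X p = fderiv ℝ f p (X p)) ∧
    (∀ X Y : VF, SmoothVF X → SmoothVF Y →
      ∀ p : Pt, gmet (nabla X gradF) Y p + Sstar X Y p + lam p * gmet X Y p = 0) := by
  constructor
  · intro X _ p
    rw [fderiv_f]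
    simp only [gmet, gradF, exp_two]
    have h := exp_ne_zero (p 2)
    simp [Real.exp_neg]
    field_simp
    ring
  · intro X Y _ _ p
    simp only [gmet, nabla, fderiv_G0, fderiv_G1, fderiv_G2]
    simp only [Sstar, eta, lam, gmet, gradF, exp_two]
    have h := exp_ne_zero (p 2)
    simp [Real.exp_neg]
    field_simp
    ring
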